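/- Let q be an odd prime power, let d = 5, let 𝓔 ⊆ F_q^5 be a finite set with |𝓔| ≥ 12·q^3, and let r ∈ F_q. If |P_1(r)| > 1.34609 · |𝓔|^(11/3) (an inequality of real numbers, with real exponent 11/3), then 𝓔 contains a pair of 4-paths with dilation ratio r. -/

import Mathlib

/-- `norm2 x = x₁² + ⋯ + x_d²` for `x ∈ F_q^d`. -/
def norm2 {F : Type*} [Field F] {d : ℕ} (x : Fin d → F) : F := ∑ i, x i ^ 2

/-- `𝓔` contains a pair of `k`-stars with dilation ratio `r`: there are distinct
`x₁, …, x_{k+1} ∈ 𝓔` and distinct `y₁, …, y_{k+1} ∈ 𝓔` with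
`‖y_i − y₁‖ = r‖x_i − x₁‖ ≠ 0` for `i = 2, …, k+1`. -/
def ContainsPairOfStars {F : Type*} [Field F] {d : ℕ}
    (𝓔 : Finset (Fin d → F)) (k : ℕ) (r : F) : Prop :=
  ∃ x y : Fin (k + 1) → (Fin d → F),
    Function.Injective x ∧ Function.Injective y ∧
    (∀ i, x i ∈ 𝓔) ∧ (∀ i, y i ∈ 𝓔) ∧
    ∀ i : Fin (k + 1), i ≠ 0 →
      norm2 (y i - y 0) = r * norm2 (x i - x 0) ∧ r * norm2 (x i - x 0) ≠ 0

/-- `𝓔` contains a pair of `k`-paths with dilation ratio `r`: there are distinct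
`x₁, …, x_{k+1} ∈ 𝓔` and distinct `y₁, …, y_{k+1} ∈ 𝓔` with
`‖y_{i+1} − y_i‖ = r‖x_{i+1} − x_i‖ ≠ 0` for `i = 1, …, k`. -/
def ContainsPairOfPaths {F : Type*} [Field F] {d : ℕ}
    (𝓔 : Finset (Fin d → F)) (k : ℕ) (r : F) : Prop :=
  ∃ x y : Fin (k + 1) → (Fin d → F),
    Function.Injective x ∧ Function.Injective y ∧
    (∀ i, x i ∈ 𝓔) ∧ (∀ i, y i ∈ 𝓔) ∧
    ∀ i : Fin k,
      norm2 (y i.succ - y i.castSucc) = r * norm2 (x i.succ - x i.castSucc) ∧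
      r * norm2 (x i.succ - x i.castSucc) ≠ 0

open scoped Classical

/-- `P_k(r)`: tuples `(x₁, …, x_{k+1}, y₁, …, y_{k+1}) ∈ 𝓔^{2k+2}` with
`‖y_{i+1} − y_i‖ = r‖x_{i+1} − x_i‖ ≠ 0` for all `i = 1, …, k`. -/

noncomputable def Pset {F : Type*} [Field F] [Fintype F] {d : ℕ}
    (𝓔 : Finset (Fin d → F)) (k : ℕ) (r : F) :
    Finset ((Fin (k + 1) → Fin d → F) × (Fin (k + 1) → Fin d → F)) :=
  Finset.univ.filter fun p =>
    (∀ i, p.1 i ∈ 𝓔) ∧ (∀ i, p.2 i ∈ 𝓔) ∧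
    ∀ i : Fin k,
      norm2 (p.2 i.succ - p.2 i.castSucc) = r * norm2 (p.1 i.succ - p.1 i.castSucc) ∧
      r * norm2 (p.1 i.succ - p.1 i.castSucc) ≠ 0

/-!
Regard `𝓔 × 𝓔` as a graph in which `(x, y)` and `(x', y')` are adjacent when
`‖y' - y‖ = r ‖x' - x‖ ≠ 0`; then `P_1(r)` is its set of ordered edges. Deleting vertices of
small degree one at a time leaves a nonempty subgraph of minimum degree greater than `16 q⁴`
once `|P_1(r)| > 32 q⁴ |𝓔|²`, which the hypotheses guarantee. Fixing one coordinate of a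
neighbour of `(x, y)` confines the other to a sphere of `F_q⁵`, which has at most `2 q⁴` points,
so a path can be extended greedily while avoiding all coordinates used so far.
-/

open Finset

section Counting

variable {F : Type*} [Field F]

theorem card_filter_pow_eq_le [Fintype F] {n : ℕ} (hn : 0 < n) (c : F) :
    #(univ.filter fun a : F => a ^ n = c) ≤ n :=
  calc #(univ.filter fun a : F => a ^ n = c) ≤ #(Polynomial.nthRootsFinset n c) :=
        card_le_card fun a ha => (Polynomial.mem_nthRootsFinset hn c).2 (mem_filter.1 ha).2
    _ ≤ n := by
        rw [Polynomial.nthRootsFinset_def]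
        exact (Multiset.toFinset_card_le _).trans (Polynomial.card_nthRoots n c)

theorem norm2_eq_norm2_init_add_sq {d : ℕ} (z : Fin (d + 1) → F) :
    norm2 z = norm2 (Fin.init z) + z (Fin.last d) ^ 2 := by
  simp only [norm2, Fin.sum_univ_castSucc, Fin.init]

theorem card_filter_norm2_eq_le [Fintype F] {d : ℕ} (t : F) :
    #(univ.filter fun z : Fin (d + 1) → F => norm2 z = t) ≤ 2 * Fintype.card F ^ d := by
  set S := univ.filter fun z : Fin (d + 1) → F => norm2 z = t
  have hfiber : ∀ w ∈ S.image Fin.init, #(S.filter (Fin.init · = w)) ≤ 2 := by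
    intro w _
    refine le_trans (card_le_card_of_injOn (fun z => z (Fin.last d)) ?_ ?_)
      (card_filter_pow_eq_le two_pos (t - norm2 w))
    · intro z hz
      obtain ⟨hzS, rfl⟩ := mem_filter.1 hz
      simp only [coe_filter, mem_univ, true_and, Set.mem_ofPred_eq]
      rw [(mem_filter.1 hzS).2.symm.trans (norm2_eq_norm2_init_add_sq z)]
      ring
    · intro z hz z' hz' h
      rw [← Fin.snoc_init_self z, ← Fin.snoc_init_self z', (mem_filter.1 hz).2,
        (mem_filter.1 hz').2]
      exact congrArg _ h
  calc #S ≤ 2 * #(S.image Fin.init) := card_le_mul_card_image S 2 hfiber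
    _ ≤ 2 * Fintype.card F ^ d := by
        gcongr
        simpa using card_le_univ (S.image Fin.init)

end Counting

section Graph

variable {α : Type*} [DecidableEq α]

theorem sum_card_filter_le_sum_card_filter_erase_add {A : α → α → Prop}
    (hA : ∀ u v, A u v → A v u) (S : Finset α) {u : α} (hu : u ∈ S) :
    ∑ v ∈ S, #(S.filter (A v)) ≤
      ∑ v ∈ S.erase u, #((S.erase u).filter (A v)) + 2 * #(S.filter (A u)) := by
  rw [← add_sum_erase S _ hu]
  set S' := S.erase u
  have hstep : ∀ v, #(S.filter (A v)) ≤ #(S'.filter (A v)) + if A v u then 1 else 0 := by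
    intro v
    rw [filter_erase]
    split_ifs with h
    · exact Nat.sub_le_iff_le_add.1 pred_card_le_card_erase
    · rw [erase_eq_of_notMem fun h' => h (mem_filter.1 h').2, add_zero]
  have hback : #(S'.filter (A · u)) ≤ #(S.filter (A u)) :=
    card_le_card fun v hv =>
      mem_filter.2 ⟨mem_of_mem_erase (mem_filter.1 hv).1, hA _ _ (mem_filter.1 hv).2⟩
  have hsum := sum_le_sum fun v (_ : v ∈ S') => hstep v
  rw [sum_add_distrib, sum_boole, Nat.cast_id] at hsum
  omega

theorem exists_subset_forall_lt_card_filter {A : α → α → Prop} (hA : ∀ u v, A u v → A v u)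
    (D : ℕ) (S : Finset α) (hS : 2 * D * #S < ∑ u ∈ S, #(S.filter (A u))) :
    ∃ U ⊆ S, U.Nonempty ∧ ∀ u ∈ U, D < #(U.filter (A u)) := by
  induction S using Finset.strongInduction with
  | H S ih =>
    by_cases hlow : ∃ u ∈ S, #(S.filter (A u)) ≤ D
    · obtain ⟨u, hu, hdeg⟩ := hlow
      have hsum := sum_card_filter_le_sum_card_filter_erase_add hA S hu
      have hcard := card_erase_add_one hu
      obtain ⟨U, hUS, hU⟩ := ih (S.erase u) (erase_ssubset hu) (by
        rw [← hcard, mul_add] at hS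
        linarith)
      exact ⟨U, hUS.trans (erase_subset u S), hU⟩
    · push Not at hlow
      refine ⟨S, subset_rfl, ?_, hlow⟩
      by_contra hempty
      simp [not_nonempty_iff_eq_empty.1 hempty] at hS

theorem exists_mem_fst_notMem_snd_notMem {β : Type*} [DecidableEq β] {s : ℕ}
    (N : Finset (α × β)) (X : Finset α) (Y : Finset β)
    (hfst : ∀ a, #(N.filter (·.1 = a)) ≤ s) (hsnd : ∀ b, #(N.filter (·.2 = b)) ≤ s)
    (hN : (#X + #Y) * s < #N) :
    ∃ w ∈ N, w.1 ∉ X ∧ w.2 ∉ Y := by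
  by_contra! hbad
  have hcover : N ⊆ X.biUnion (fun a => N.filter (·.1 = a)) ∪
      Y.biUnion (fun b => N.filter (·.2 = b)) := by
    intro w hw
    by_cases hX : w.1 ∈ X
    · exact mem_union_left _ (mem_biUnion.2 ⟨w.1, hX, mem_filter.2 ⟨hw, rfl⟩⟩)
    · exact mem_union_right _ (mem_biUnion.2 ⟨w.2, hbad w hw hX, mem_filter.2 ⟨hw, rfl⟩⟩)
  have := (card_le_card hcover).trans (card_union_le _ _)
  have := card_biUnion_le_card_mul X _ s fun a _ => hfst a
  have := card_biUnion_le_card_mul Y _ s fun b _ => hsnd b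
  nlinarith

theorem exists_path_of_forall_lt_card_filter {β : Type*} [DecidableEq β]
    {A : α × β → α × β → Prop} {U : Finset (α × β)} {s k : ℕ} (hU : U.Nonempty)
    (hfst : ∀ u a, #((U.filter (A u)).filter (·.1 = a)) ≤ s)
    (hsnd : ∀ u b, #((U.filter (A u)).filter (·.2 = b)) ≤ s)
    (hdeg : ∀ u ∈ U, 2 * k * s < #(U.filter (A u))) :
    ∃ v : Fin (k + 1) → α × β, (∀ i, v i ∈ U) ∧ Function.Injective (Prod.fst ∘ v) ∧
      Function.Injective (Prod.snd ∘ v) ∧ ∀ i : Fin k, A (v i.castSucc) (v i.succ) := by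
  induction k with
  | zero =>
    obtain ⟨u, hu⟩ := hU
    exact ⟨fun _ => u, fun _ => hu, Function.injective_of_subsingleton (α := Fin 1) _,
      Function.injective_of_subsingleton (α := Fin 1) _, fun i => i.elim0⟩
  | succ k ih =>
    obtain ⟨v, hvU, hv₁, hv₂, hvA⟩ :=
      ih fun u hu => lt_of_le_of_lt (by gcongr; omega) (hdeg u hu)
    have hX : #(univ.image (Prod.fst ∘ v)) ≤ k + 1 := card_image_le.trans (by simp)
    have hY : #(univ.image (Prod.snd ∘ v)) ≤ k + 1 := card_image_le.trans (by simp)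
    obtain ⟨w, hw, hw₁, hw₂⟩ :=
      exists_mem_fst_notMem_snd_notMem (U.filter (A (v (Fin.last k)))) _ _ (hfst _) (hsnd _)
        (lt_of_le_of_lt (by nlinarith) (hdeg _ (hvU _)))
    refine ⟨Fin.snoc v w, fun i => ?_, ?_, ?_, fun i => ?_⟩
    · induction i using Fin.lastCases <;> simp [hvU, (mem_filter.1 hw).1]
    · rw [Fin.comp_snoc]
      exact Fin.snoc_injective_of_injective hv₁ (by simpa using hw₁)
    · rw [Fin.comp_snoc]
      exact Fin.snoc_injective_of_injective hv₂ (by simpa using hw₂)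
    · induction i using Fin.lastCases with
      | last => simpa using (mem_filter.1 hw).2
      | cast i =>
        rw [Fin.succ_castSucc, Fin.snoc_castSucc, Fin.snoc_castSucc]
        exact hvA i

end Graph

section Dilation

variable {F : Type*} [Field F] {d : ℕ}

theorem norm2_sub_comm (x y : Fin d → F) : norm2 (x - y) = norm2 (y - x) := by
  simp only [norm2, Pi.sub_apply]
  exact sum_congr rfl fun i _ => by ring

def DilationAdj (r : F) (u w : (Fin d → F) × (Fin d → F)) : Prop :=
  norm2 (w.2 - u.2) = r * norm2 (w.1 - u.1) ∧ r * norm2 (w.1 - u.1) ≠ 0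

theorem DilationAdj.symm {r : F} {u w : (Fin d → F) × (Fin d → F)} (h : DilationAdj r u w) :
    DilationAdj r w u := by
  unfold DilationAdj at h ⊢
  rwa [norm2_sub_comm u.2, norm2_sub_comm u.1]

variable [Fintype F]

theorem card_filter_dilationAdj_fst_eq_le (r : F)
    (U : Finset ((Fin (d + 1) → F) × (Fin (d + 1) → F)))
    (u : (Fin (d + 1) → F) × (Fin (d + 1) → F)) (a : Fin (d + 1) → F) :
    #((U.filter (DilationAdj r u)).filter (·.1 = a)) ≤ 2 * Fintype.card F ^ d := by
  refine le_trans (card_le_card_of_injOn (fun w => w.2 - u.2) (t := univ.filter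
    fun z => norm2 z = r * norm2 (a - u.1)) ?_ ?_) (card_filter_norm2_eq_le _)
  · intro w hw
    obtain ⟨hwU, rfl⟩ := mem_filter.1 hw
    simpa using (mem_filter.1 hwU).2.1
  · intro w hw w' hw' h
    exact Prod.ext ((mem_filter.1 hw).2.trans (mem_filter.1 hw').2.symm) (sub_left_injective h)

theorem card_filter_dilationAdj_snd_eq_le (r : F)
    (U : Finset ((Fin (d + 1) → F) × (Fin (d + 1) → F)))
    (u : (Fin (d + 1) → F) × (Fin (d + 1) → F)) (b : Fin (d + 1) → F) :
    #((U.filter (DilationAdj r u)).filter (·.2 = b)) ≤ 2 * Fintype.card F ^ d := by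
  refine le_trans (card_le_card_of_injOn (fun w => w.1 - u.1) (t := univ.filter
    fun z => norm2 z = r⁻¹ * norm2 (b - u.2)) ?_ ?_) (card_filter_norm2_eq_le _)
  · intro w hw
    obtain ⟨hwU, rfl⟩ := mem_filter.1 hw
    obtain ⟨heq, hne⟩ := (mem_filter.1 hwU).2
    simp only [coe_filter, mem_univ, true_and, Set.mem_ofPred_eq]
    rw [heq, inv_mul_cancel_left₀ (left_ne_zero_of_mul hne)]
  · intro w hw w' hw' h
    exact Prod.ext (sub_left_injective h) ((mem_filter.1 hw).2.trans (mem_filter.1 hw').2.symm)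

theorem card_Pset_one_le_sum_card_filter_dilationAdj (𝓔 : Finset (Fin d → F)) (r : F) :
    #(Pset 𝓔 1 r) ≤ ∑ u ∈ 𝓔 ×ˢ 𝓔, #((𝓔 ×ˢ 𝓔).filter (DilationAdj r u)) := by
  have hpairs : ∑ u ∈ 𝓔 ×ˢ 𝓔, #((𝓔 ×ˢ 𝓔).filter (DilationAdj r u)) =
      #(((𝓔 ×ˢ 𝓔) ×ˢ (𝓔 ×ˢ 𝓔)).filter fun e => DilationAdj r e.1 e.2) := by
    simp only [card_filter]
    exact (sum_product' _ _ fun u v => if DilationAdj r u v then 1 else 0).symm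
  rw [hpairs]
  refine card_le_card_of_injOn (fun p => ((p.1 0, p.2 0), (p.1 1, p.2 1))) ?_ ?_
  · intro p hp
    simp only [Pset, coe_filter, mem_univ, true_and, Set.mem_ofPred_eq] at hp
    simpa [hp.1, hp.2.1, DilationAdj] using hp.2.2 0
  · intro p _ p' _ h
    simp only [Prod.mk.injEq] at h
    exact Prod.ext (funext <| Fin.forall_fin_two.2 ⟨h.1.1, h.2.1⟩)
      (funext <| Fin.forall_fin_two.2 ⟨h.1.2, h.2.2⟩)

theorem containsPairOfPaths_of_lt_card_Pset_one {k : ℕ} (𝓔 : Finset (Fin (d + 1) → F))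
    (r : F) (h : 8 * k * Fintype.card F ^ d * #𝓔 ^ 2 < #(Pset 𝓔 1 r)) :
    ContainsPairOfPaths 𝓔 k r := by
  obtain ⟨U, hU𝓔, hU, hdeg⟩ := exists_subset_forall_lt_card_filter
    (fun _ _ => DilationAdj.symm) (2 * k * (2 * Fintype.card F ^ d)) (𝓔 ×ˢ 𝓔) <| by
      refine lt_of_lt_of_le ?_ (card_Pset_one_le_sum_card_filter_dilationAdj 𝓔 r)
      rw [card_product]
      linarith [h, show 2 * (2 * k * (2 * Fintype.card F ^ d)) * (#𝓔 * #𝓔) =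
        8 * k * Fintype.card F ^ d * #𝓔 ^ 2 by ring]
  obtain ⟨v, hvU, hv₁, hv₂, hvA⟩ := exists_path_of_forall_lt_card_filter hU
    (card_filter_dilationAdj_fst_eq_le r U) (card_filter_dilationAdj_snd_eq_le r U) hdeg
  exact ⟨Prod.fst ∘ v, Prod.snd ∘ v, hv₁, hv₂, fun i => (mem_product.1 (hU𝓔 (hvU i))).1,
    fun i => (mem_product.1 (hU𝓔 (hvU i))).2, hvA⟩

end Dilation

theorem natCast_mul_sq_le_rpow_eleven_div_three {q n : ℕ} (h : 12 * q ^ 3 ≤ n) :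
    ((32 * q ^ 4 * n ^ 2 : ℕ) : ℝ) ≤ (n : ℝ) ^ ((11 : ℝ) / 3) := by
  have hnat : (32 * q ^ 4 * n ^ 2) ^ 3 ≤ n ^ 11 := by
    rcases Nat.eq_zero_or_pos q with rfl | hq
    · simp
    calc (32 * q ^ 4 * n ^ 2) ^ 3 = 32768 * q ^ 12 * n ^ 6 := by ring
      _ ≤ 248832 * q ^ 15 * n ^ 6 := by gcongr <;> omega
      _ = (12 * q ^ 3) ^ 5 * n ^ 6 := by ring
      _ ≤ n ^ 5 * n ^ 6 := by gcongr
      _ = n ^ 11 := by ring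
  have hcube : ((n : ℝ) ^ ((11 : ℝ) / 3)) ^ 3 = (n : ℝ) ^ 11 := by
    rw [← Real.rpow_mul_natCast (Nat.cast_nonneg n)]
    norm_num
  refine le_of_pow_le_pow_left₀ three_ne_zero (by positivity) ?_
  rw [hcube]
  exact_mod_cast hnat

theorem paths_of_Pset_one_large_dim_five_general {F : Type*} [Field F] [Fintype F]
    (𝓔 : Finset (Fin 5 → F)) (r : F)
    (hcard : 12 * Fintype.card F ^ 3 ≤ 𝓔.card)
    (hP : 1.34609 * (𝓔.card : ℝ) ^ ((11 : ℝ) / 3) < ((Pset 𝓔 1 r).card : ℝ)) :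
    ContainsPairOfPaths 𝓔 4 r := by
  refine containsPairOfPaths_of_lt_card_Pset_one (d := 4) 𝓔 r ?_
  have hbound := natCast_mul_sq_le_rpow_eleven_div_three hcard
  have hpos := Real.rpow_nonneg (Nat.cast_nonneg 𝓔.card) ((11 : ℝ) / 3)
  have : ((32 * Fintype.card F ^ 4 * #𝓔 ^ 2 : ℕ) : ℝ) < #(Pset 𝓔 1 r) := by linarith
  exact_mod_cast this

/-- For `d = 5`, if `|𝓔| ≥ 12·q³` and `|P_1(r)| > 1.34609·|𝓔|^(11/3)`,
then `𝓔` contains a pair of `4`-paths with dilation ratio `r`. -/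
theorem paths_of_Pset_one_large_dim_five {F : Type*} [Field F] [Fintype F]
    (hodd : Odd (Fintype.card F))
    (𝓔 : Finset (Fin 5 → F)) (r : F)
    (hcard : 12 * Fintype.card F ^ 3 ≤ 𝓔.card)
    (hP : 1.34609 * (𝓔.card : ℝ) ^ ((11 : ℝ) / 3) < ((Pset 𝓔 1 r).card : ℝ)) :
    ContainsPairOfPaths 𝓔 4 r :=
  paths_of_Pset_one_large_dim_five_general 𝓔 r hcard hP
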